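/- Projected-distance decrease (inequality (4.8) in the proof of Theorem 4.6): with Δ^{k−1} = min_{(x,y) ∈ Z^*} V_k(x^{k−1} − x, y^k − y) and Δ^k = min_{(x,y) ∈ Z^*} V_{k+1}(x^k − x, y^{k+1} − y), it holds for every k ≥ 1 that E_k[Δ^k] ≤ Δ^{k−1} − V(z^k − z^{k−1}), where z^k = (x^k, y^k). -/

import Mathlib

/-!
For each outcome `l` of `i_k`, `Δ^k` is at most the value of `V_{k+1}` at
`z* = (x*, y*) = za ∈ Z^*`. Only the block `l` of `y` moves, so averaging with the weights `p_l` turns this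
into a deterministic quantity. The prox steps say that `(x^{k-1} - x^k)/τ - Aᵀȳ^k ∈ ∂g(x^k)` and
`(y_l^k - ŷ_l)/σ_l + A_l x^k ∈ ∂f_l^*(ŷ_l)`; pairing them with the subgradients
`-Aᵀy* ∈ ∂g(x*)`, `A_l x* ∈ ∂f_l^*(y_l*)` by monotonicity of the subdifferential, and
expanding the squared distances by the three-point identity, gives the bound.
-/

noncomputable section

open Finset

local notation "⟪" x ", " y "⟫" => @inner ℝ _ _ x y

/-- `v = prox_{t·h}(u)`: `v` minimizes `w ↦ h w + ‖w − u‖²/(2t)`. -/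
def IsProx {E : Type*} [NormedAddCommGroup E] [InnerProductSpace ℝ E]
    (t : ℝ) (h : E → ℝ) (u v : E) : Prop :=
  ∀ w, h v + ‖v - u‖ ^ 2 / (2 * t) ≤ h w + ‖w - u‖ ^ 2 / (2 * t)

/-- Convex subdifferential of `h` at `x`. -/
def subdiffAt {E : Type*} [NormedAddCommGroup E] [InnerProductSpace ℝ E]
    (h : E → ℝ) (x : E) : Set E :=
  {v | ∀ z, h x + ⟪v, z - x⟫ ≤ h z}

/-- `A^⊤ y = ∑ i (A i)^* (y i)`. -/
def AT {X : Type*} [NormedAddCommGroup X] [InnerProductSpace ℝ X] [CompleteSpace X]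
    {n : ℕ} {Y : Fin n → Type*} [∀ i, NormedAddCommGroup (Y i)]
    [∀ i, InnerProductSpace ℝ (Y i)] [∀ i, CompleteSpace (Y i)]
    (A : ∀ i, X →L[ℝ] Y i) (y : ∀ i, Y i) : X :=
  ∑ i, (A i).adjoint (y i)

open Function Set Filter Topology

theorem le_of_forall_mem_Ioc_le_add_mul {a b c : ℝ}
    (h : ∀ θ ∈ Ioc (0 : ℝ) 1, a ≤ b + θ * c) : a ≤ b := by
  have hcont : Continuous fun θ : ℝ => b + θ * c := by fun_prop
  have hlim : Tendsto (fun θ : ℝ => b + θ * c) (𝓝[>] 0) (𝓝 b) :=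
    (hcont.tendsto' 0 b (by simp)).mono_left nhdsWithin_le_nhds
  exact ge_of_tendsto hlim (Filter.mem_of_superset (Ioc_mem_nhdsGT one_pos) h)

theorem Finset.sum_apply_update {ι : Type*} [Fintype ι] [DecidableEq ι] {β : ι → Type*}
    (F : ∀ i, β i → ℝ) (y : ∀ i, β i) (l : ι) (v : β l) :
    ∑ i, F i (update y l v i) = ∑ i, F i (y i) + (F l v - F l (y l)) := by
  rw [← add_sum_erase _ _ (mem_univ l), ← add_sum_erase _ _ (mem_univ l), update_self,
    sum_congr rfl fun i hi => by rw [update_of_ne (ne_of_mem_erase hi)]]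
  ring

section Prox

variable {E : Type*} [NormedAddCommGroup E] [InnerProductSpace ℝ E]
  {t : ℝ} {h : E → ℝ} {u v : E}

theorem IsProx.inv_smul_sub_mem_subdiffAt (hh : ConvexOn ℝ univ h)
    (hv : IsProx t h u v) : t⁻¹ • (u - v) ∈ subdiffAt h v := by
  intro w
  rw [real_inner_smul_left]
  -- `v` beats every `v + θ (w - v)` in the prox objective; let `θ → 0`
  refine le_of_forall_mem_Ioc_le_add_mul (c := (2 * t)⁻¹ * ‖w - v‖ ^ 2) fun θ ⟨hθ0, hθ1⟩ => ?_
  have hmin := hv (v + θ • (w - v))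
  have hconv : h (v + θ • (w - v)) ≤ (1 - θ) * h v + θ * h w := by
    have := hh.2 (mem_univ v) (mem_univ w) (by linarith : 0 ≤ 1 - θ) hθ0.le (by ring)
    rwa [show (1 - θ) • v + θ • w = v + θ • (w - v) by module] at this
  have hexpand : ‖v + θ • (w - v) - u‖ ^ 2
      = ‖v - u‖ ^ 2 - 2 * θ * ⟪u - v, w - v⟫ + θ ^ 2 * ‖w - v‖ ^ 2 := by
    rw [show v + θ • (w - v) - u = θ • (w - v) - (u - v) by abel, norm_sub_sq_real,
      inner_smul_left, norm_smul, Real.norm_of_nonneg hθ0.le]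
    simp only [conj_trivial, real_inner_comm (u - v), norm_sub_rev u v]
    ring
  rw [hexpand] at hmin
  refine le_of_mul_le_mul_left ?_ hθ0
  linear_combination hmin + hconv

theorem inner_sub_nonneg_of_mem_subdiffAt {x y a b : E} {h : E → ℝ}
    (ha : a ∈ subdiffAt h x) (hb : b ∈ subdiffAt h y) : 0 ≤ ⟪a - b, x - y⟫ := by
  have hax := ha y
  have hby := hb x
  rw [← neg_sub x y, inner_neg_right] at hax
  rw [inner_sub_left]
  linarith

theorem IsProx.inner_le_of_mem_subdiffAt (hh : ConvexOn ℝ univ h) (hv : IsProx t h u v)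
    {s w : E} (hs : s ∈ subdiffAt h w) : ⟪s, v - w⟫ ≤ t⁻¹ * ⟪u - v, v - w⟫ := by
  have := inner_sub_nonneg_of_mem_subdiffAt (hv.inv_smul_sub_mem_subdiffAt hh) hs
  rwa [inner_sub_left, real_inner_smul_left, sub_nonneg] at this

end Prox

section SPDHG

variable {X : Type*} [NormedAddCommGroup X] [InnerProductSpace ℝ X]

theorem spdhg_dual_step {E : Type*} [NormedAddCommGroup E] [InnerProductSpace ℝ E]
    {f : E → ℝ} (hf : ConvexOn ℝ univ f) (B : X →L[ℝ] E) {σ : ℝ} (hσ : σ ≠ 0)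
    {x x' : X} {y ŷ w : E} (hŷ : IsProx σ f (y + σ • B x) ŷ) (hw : B x' ∈ subdiffAt f w) :
    σ⁻¹ * ⟪ŷ - y, ŷ - w⟫ - ⟪B (x - x'), ŷ - y⟫ ≤ ⟪B (x - x'), y - w⟫ := by
  have hmono := hŷ.inner_le_of_mem_subdiffAt hf hw
  rw [show y + σ • B x - ŷ = -(ŷ - y) + σ • B x by abel, inner_add_left, inner_neg_left,
    real_inner_smul_left, mul_add, inv_mul_cancel_left₀ hσ] at hmono
  have hsplit : ⟪B (x - x'), y - w⟫ + ⟪B (x - x'), ŷ - y⟫ = ⟪B x, ŷ - w⟫ - ⟪B x', ŷ - w⟫ := by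
    rw [← inner_add_right, sub_add_sub_cancel', map_sub, inner_sub_left]
  linarith

variable {n : ℕ} {Y : Fin n → Type*} [∀ i, NormedAddCommGroup (Y i)]
  [∀ i, InnerProductSpace ℝ (Y i)]

section Metric

variable (τ : ℝ) (p σ : Fin n → ℝ) (A : ∀ i, X →L[ℝ] Y i)

/-- The paper's `V`. -/
def spdhgMetric (x : X) (y : ∀ i, Y i) : ℝ :=
  1 / 2 * (τ⁻¹ * ‖x‖ ^ 2) + 1 / 2 * ∑ i, (σ i * p i)⁻¹ * ‖y i‖ ^ 2
    + ∑ i, (p i)⁻¹ * ⟪A i x, y i⟫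

/-- The paper's `V_k`, with `d = y^k - y^{k-1}`. -/
def spdhgLyapunov (d : ∀ i, Y i) (x : X) (y : ∀ i, Y i) : ℝ :=
  1 / 2 * (τ⁻¹ * ‖x‖ ^ 2) - ∑ i, (p i)⁻¹ * ⟪A i x, d i⟫
    + 1 / 2 * ∑ i, (σ i * p i)⁻¹ * ‖d i‖ ^ 2 + 1 / 2 * ∑ i, (σ i * p i)⁻¹ * ‖y i‖ ^ 2

theorem spdhgLyapunov_update (x : X) (y ŷ w : ∀ i, Y i) (l : Fin n) :
    spdhgLyapunov τ p σ A (update y l (ŷ l) - y) x (update y l (ŷ l) - w)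
      = 1 / 2 * (τ⁻¹ * ‖x‖ ^ 2) + 1 / 2 * ∑ i, (σ i * p i)⁻¹ * ‖y i - w i‖ ^ 2
        + (p l)⁻¹ * ((σ l)⁻¹ * ⟪ŷ l - y l, ŷ l - w l⟫ - ⟪A l x, ŷ l - y l⟫) := by
  have hcross := sum_apply_update (fun i z => (p i)⁻¹ * ⟪A i x, z - y i⟫) y l (ŷ l)
  have hstepSq := sum_apply_update (fun i z => (σ i * p i)⁻¹ * ‖z - y i‖ ^ 2) y l (ŷ l)
  have hdist := sum_apply_update (fun i z => (σ i * p i)⁻¹ * ‖z - w i‖ ^ 2) y l (ŷ l)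
  simp only [sub_self, inner_zero_right, norm_zero, mul_zero, sum_const_zero, zero_add,
    ne_eq, OfNat.ofNat_ne_zero, not_false_eq_true, zero_pow] at hcross hstepSq
  have hpolar : ‖y l - w l‖ ^ 2
      = ‖ŷ l - w l‖ ^ 2 - 2 * ⟪ŷ l - w l, ŷ l - y l⟫ + ‖ŷ l - y l‖ ^ 2 := by
    rw [← norm_sub_sq_real, sub_sub_sub_cancel_left]
  unfold spdhgLyapunov
  simp only [Pi.sub_apply]
  rw [hcross, hstepSq, hdist, hpolar, real_inner_comm (ŷ l - w l), mul_inv]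
  ring

theorem sum_mul_spdhgLyapunov_update (hp : ∀ i, p i ≠ 0) (hpsum : ∑ i, p i = 1) (x : X)
    (y ŷ w : ∀ i, Y i) :
    ∑ l, p l * spdhgLyapunov τ p σ A (update y l (ŷ l) - y) x (update y l (ŷ l) - w)
      = 1 / 2 * (τ⁻¹ * ‖x‖ ^ 2) + 1 / 2 * ∑ i, (σ i * p i)⁻¹ * ‖y i - w i‖ ^ 2
        + ∑ l, ((σ l)⁻¹ * ⟪ŷ l - y l, ŷ l - w l⟫ - ⟪A l x, ŷ l - y l⟫) := by
  simp_rw [spdhgLyapunov_update, mul_add, ← mul_assoc, mul_inv_cancel₀ (hp _), one_mul,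
    sum_add_distrib, ← sum_mul, hpsum, one_mul]

end Metric

variable [CompleteSpace X] [∀ i, CompleteSpace (Y i)]

theorem inner_AT (A : ∀ i, X →L[ℝ] Y i) (y : ∀ i, Y i) (x : X) :
    ⟪AT A y, x⟫ = ∑ i, ⟪A i x, y i⟫ := by
  rw [AT, sum_inner]
  exact sum_congr rfl fun i _ => by rw [ContinuousLinearMap.adjoint_inner_left, real_inner_comm]

theorem spdhg_primal_step {g : X → ℝ} (hg : ConvexOn ℝ univ g) (A : ∀ i, X →L[ℝ] Y i)
    {τ : ℝ} (hτ : τ ≠ 0) {x' x xs : X} {yb ys : ∀ i, Y i}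
    (hx : IsProx τ g (x' - τ • AT A yb) x) (hs : -AT A ys ∈ subdiffAt g xs) :
    ∑ i, ⟪A i (x - xs), yb i - ys i⟫ ≤ τ⁻¹ * ⟪x' - x, x - xs⟫ := by
  have hmono := hx.inner_le_of_mem_subdiffAt hg hs
  rw [show x' - τ • AT A yb - x = (x' - x) - τ • AT A yb by abel, inner_sub_left,
    real_inner_smul_left, mul_sub, inv_mul_cancel_left₀ hτ, inner_neg_left,
    inner_AT, inner_AT] at hmono
  rw [sum_congr rfl fun i _ => inner_sub_right _ _ _, sum_sub_distrib]
  linarith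

theorem spdhg_primal_bound {g : X → ℝ} (hg : ConvexOn ℝ univ g) (A : ∀ i, X →L[ℝ] Y i)
    {τ : ℝ} (hτ : τ ≠ 0) (p σ : Fin n → ℝ) {x' x xs : X} {y' y ys : ∀ i, Y i}
    (hx : IsProx τ g (x' - τ • AT A (fun j => y j + (p j)⁻¹ • (y j - y' j))) x)
    (hs : -AT A ys ∈ subdiffAt g xs) :
    1 / 2 * (τ⁻¹ * ‖x - xs‖ ^ 2) + 1 / 2 * ∑ i, (σ i * p i)⁻¹ * ‖y i - ys i‖ ^ 2
        + ∑ i, ⟪A i (x - xs), y i - ys i⟫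
      ≤ spdhgLyapunov τ p σ A (y - y') (x' - xs) (y - ys)
        - spdhgMetric τ p σ A (x - x') (y - y') := by
  have hstep := spdhg_primal_step hg A hτ hx hs
  have hsplit : ∀ i, ⟪A i (x - xs), y i + (p i)⁻¹ • (y i - y' i) - ys i⟫
      = ⟪A i (x - xs), y i - ys i⟫ + (p i)⁻¹ * ⟪A i (x' - xs), y i - y' i⟫
        + (p i)⁻¹ * ⟪A i (x - x'), y i - y' i⟫ := by
    intro i
    rw [show y i + (p i)⁻¹ • (y i - y' i) - ys i = (y i - ys i) + (p i)⁻¹ • (y i - y' i) by abel,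
      inner_add_right, inner_smul_right, show x - xs = (x' - xs) + (x - x') by abel, map_add]
    simp only [inner_add_left]
    ring
  rw [sum_congr rfl fun i _ => hsplit i, sum_add_distrib, sum_add_distrib] at hstep
  have hcos : ‖x' - xs‖ ^ 2 = ‖x - x'‖ ^ 2 + 2 * ⟪x' - x, x - xs⟫ + ‖x - xs‖ ^ 2 := by
    rw [← norm_sub_rev x', ← norm_add_sq_real, sub_add_sub_cancel]
  unfold spdhgLyapunov spdhgMetric
  simp only [Pi.sub_apply]
  linear_combination hstep - τ⁻¹ / 2 * hcos

end SPDHG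

/-- `E_k` is the `p`-weighted average over the outcome `l` of `i_k`. -/
theorem spdhg_projected_distance_decrease_general
    {X : Type*} [NormedAddCommGroup X] [InnerProductSpace ℝ X] [FiniteDimensional ℝ X]
    {n : ℕ} {Y : Fin n → Type*} [∀ i, NormedAddCommGroup (Y i)]
    [∀ i, InnerProductSpace ℝ (Y i)] [∀ i, FiniteDimensional ℝ (Y i)]
    (g : X → ℝ) (fstar : ∀ i, Y i → ℝ)
    (hg : ConvexOn ℝ Set.univ g) (hfs : ∀ i, ConvexOn ℝ Set.univ (fstar i))
    (A : ∀ i, X →L[ℝ] Y i)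
    (p σ : Fin n → ℝ) (τ : ℝ)
    (hp : ∀ i, 0 < p i) (hpsum : ∑ i, p i = 1)
    (hτ : 0 < τ) (hσ : ∀ i, 0 < σ i)
    -- the solution set Z^*
    (Zs : Set (X × (∀ i, Y i)))
    (hZs : Zs = {z | -(AT A z.2) ∈ subdiffAt g z.1
      ∧ ∀ i, A i z.1 ∈ subdiffAt (fstar i) (z.2 i)})
    -- SPDHG iterates at step k: x^{k−1}, y^{k−1}, y^k, x^k, ŷ^{k+1}
    (xprev : X) (yprev ycur : ∀ i, Y i) (xcur : X)
    (hx : IsProx τ g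
      (xprev - τ • AT A (fun j => ycur j + (p j)⁻¹ • (ycur j - yprev j))) xcur)
    (yh : ∀ i, Y i)
    (hyh : ∀ i, IsProx (σ i) (fstar i) (ycur i + σ i • A i xcur) (yh i))
    -- za attains Δ^{k−1} = min_{z ∈ Z^*} V_k(x^{k−1} − x, y^k − y)
    (za : X × (∀ i, Y i)) (hza : za ∈ Zs)
    -- zb l attains Δ^k = min_{z ∈ Z^*} V_{k+1}(x^k − x, y^{k+1} − y) when i_k = l
    (zb : Fin n → X × (∀ i, Y i))
    (hzbmin : ∀ l, ∀ z ∈ Zs,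
      ((1 / 2) * (τ⁻¹ * ‖xcur - (zb l).1‖ ^ 2)
        - (∑ i, (p i)⁻¹ * ⟪A i (xcur - (zb l).1),
            Function.update ycur l (yh l) i - ycur i⟫)
        + (1 / 2) * (∑ i, (σ i * p i)⁻¹ *
            ‖Function.update ycur l (yh l) i - ycur i‖ ^ 2)
        + (1 / 2) * (∑ i, (σ i * p i)⁻¹ *
            ‖Function.update ycur l (yh l) i - (zb l).2 i‖ ^ 2))
      ≤ ((1 / 2) * (τ⁻¹ * ‖xcur - z.1‖ ^ 2)
        - (∑ i, (p i)⁻¹ * ⟪A i (xcur - z.1),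
            Function.update ycur l (yh l) i - ycur i⟫)
        + (1 / 2) * (∑ i, (σ i * p i)⁻¹ *
            ‖Function.update ycur l (yh l) i - ycur i‖ ^ 2)
        + (1 / 2) * (∑ i, (σ i * p i)⁻¹ *
            ‖Function.update ycur l (yh l) i - z.2 i‖ ^ 2))) :
    -- E_k[Δ^k] ≤ Δ^{k−1} − V(z^k − z^{k−1})
    (∑ l, p l *
        ((1 / 2) * (τ⁻¹ * ‖xcur - (zb l).1‖ ^ 2)
          - (∑ i, (p i)⁻¹ * ⟪A i (xcur - (zb l).1),
              Function.update ycur l (yh l) i - ycur i⟫)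
          + (1 / 2) * (∑ i, (σ i * p i)⁻¹ *
              ‖Function.update ycur l (yh l) i - ycur i‖ ^ 2)
          + (1 / 2) * (∑ i, (σ i * p i)⁻¹ *
              ‖Function.update ycur l (yh l) i - (zb l).2 i‖ ^ 2)))
    ≤
    ((1 / 2) * (τ⁻¹ * ‖xprev - za.1‖ ^ 2)
      - (∑ i, (p i)⁻¹ * ⟪A i (xprev - za.1), ycur i - yprev i⟫)
      + (1 / 2) * (∑ i, (σ i * p i)⁻¹ * ‖ycur i - yprev i‖ ^ 2)
      + (1 / 2) * (∑ i, (σ i * p i)⁻¹ * ‖ycur i - za.2 i‖ ^ 2))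
    - ((1 / 2) * (τ⁻¹ * ‖xcur - xprev‖ ^ 2)
        + (1 / 2) * (∑ i, (σ i * p i)⁻¹ * ‖ycur i - yprev i‖ ^ 2)
        + ∑ i, (p i)⁻¹ * ⟪A i (xcur - xprev), ycur i - yprev i⟫) := by
  have hza_saddle := hZs ▸ hza
  show ∑ l, p l * spdhgLyapunov τ p σ A (update ycur l (yh l) - ycur) (xcur - (zb l).1)
        (update ycur l (yh l) - (zb l).2)
      ≤ spdhgLyapunov τ p σ A (ycur - yprev) (xprev - za.1) (ycur - za.2)
        - spdhgMetric τ p σ A (xcur - xprev) (ycur - yprev)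
  calc _ ≤ ∑ l, p l * spdhgLyapunov τ p σ A (update ycur l (yh l) - ycur) (xcur - za.1)
          (update ycur l (yh l) - za.2) :=
        sum_le_sum fun l _ => mul_le_mul_of_nonneg_left (hzbmin l za hza) (hp l).le
    _ = 1 / 2 * (τ⁻¹ * ‖xcur - za.1‖ ^ 2) + 1 / 2 * ∑ i, (σ i * p i)⁻¹ * ‖ycur i - za.2 i‖ ^ 2
          + ∑ l, ((σ l)⁻¹ * ⟪yh l - ycur l, yh l - za.2 l⟫
            - ⟪A l (xcur - za.1), yh l - ycur l⟫) :=
        sum_mul_spdhgLyapunov_update τ p σ A (fun i => (hp i).ne') hpsum _ _ _ _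
    _ ≤ 1 / 2 * (τ⁻¹ * ‖xcur - za.1‖ ^ 2) + 1 / 2 * ∑ i, (σ i * p i)⁻¹ * ‖ycur i - za.2 i‖ ^ 2
          + ∑ l, ⟪A l (xcur - za.1), ycur l - za.2 l⟫ := by
        gcongr with l
        exact spdhg_dual_step (hfs l) (A l) (hσ l).ne' (hyh l) (hza_saddle.2 l)
    _ ≤ _ := spdhg_primal_bound hg A hτ.ne' p σ hx hza_saddle.1

/-- Projected-distance decrease (inequality (4.8) in the proof of Theorem 4.6):
with `Δ^{k−1} = min_{z ∈ Z^*} V_k(x^{k−1} − x, y^k − y)` (attained at `za`) and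
`Δ^k = min_{z ∈ Z^*} V_{k+1}(x^k − x, y^{k+1} − y)` (attained, for each outcome `i_k = l`,
at `zb l`), one has `E_k[Δ^k] ≤ Δ^{k−1} − V(z^k − z^{k−1})`, where `E_k` is the
`p`-weighted average over the index `i_k` drawn at step `k`. -/
theorem spdhg_projected_distance_decrease
    {X : Type*} [NormedAddCommGroup X] [InnerProductSpace ℝ X] [FiniteDimensional ℝ X]
    {n : ℕ} {Y : Fin n → Type*} [∀ i, NormedAddCommGroup (Y i)]
    [∀ i, InnerProductSpace ℝ (Y i)] [∀ i, FiniteDimensional ℝ (Y i)]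
    (g : X → ℝ) (fstar : ∀ i, Y i → ℝ)
    (hg : ConvexOn ℝ Set.univ g) (hfs : ∀ i, ConvexOn ℝ Set.univ (fstar i))
    (A : ∀ i, X →L[ℝ] Y i)
    (p σ : Fin n → ℝ) (τ γ : ℝ)
    (hp : ∀ i, 0 < p i) (hpsum : ∑ i, p i = 1)
    (hτ : 0 < τ) (hσ : ∀ i, 0 < σ i) (hγ0 : 0 < γ) (hγ1 : γ < 1)
    (hstep : ∀ i, (p i)⁻¹ * τ * σ i * ‖A i‖ ^ 2 ≤ γ ^ 2)
    -- the solution set Z^*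
    (Zs : Set (X × (∀ i, Y i)))
    (hZs : Zs = {z | -(AT A z.2) ∈ subdiffAt g z.1
      ∧ ∀ i, A i z.1 ∈ subdiffAt (fstar i) (z.2 i)})
    (hZsne : Zs.Nonempty)
    -- SPDHG iterates at step k: x^{k−1}, y^{k−1}, y^k, x^k, ŷ^{k+1}
    (xprev : X) (yprev ycur : ∀ i, Y i) (xcur : X)
    (hx : IsProx τ g
      (xprev - τ • AT A (fun j => ycur j + (p j)⁻¹ • (ycur j - yprev j))) xcur)
    (yh : ∀ i, Y i)
    (hyh : ∀ i, IsProx (σ i) (fstar i) (ycur i + σ i • A i xcur) (yh i))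
    -- za attains Δ^{k−1} = min_{z ∈ Z^*} V_k(x^{k−1} − x, y^k − y)
    (za : X × (∀ i, Y i)) (hza : za ∈ Zs)
    (hzamin : ∀ z ∈ Zs,
      ((1 / 2) * (τ⁻¹ * ‖xprev - za.1‖ ^ 2)
        - (∑ i, (p i)⁻¹ * ⟪A i (xprev - za.1), ycur i - yprev i⟫)
        + (1 / 2) * (∑ i, (σ i * p i)⁻¹ * ‖ycur i - yprev i‖ ^ 2)
        + (1 / 2) * (∑ i, (σ i * p i)⁻¹ * ‖ycur i - za.2 i‖ ^ 2))
      ≤ ((1 / 2) * (τ⁻¹ * ‖xprev - z.1‖ ^ 2)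
        - (∑ i, (p i)⁻¹ * ⟪A i (xprev - z.1), ycur i - yprev i⟫)
        + (1 / 2) * (∑ i, (σ i * p i)⁻¹ * ‖ycur i - yprev i‖ ^ 2)
        + (1 / 2) * (∑ i, (σ i * p i)⁻¹ * ‖ycur i - z.2 i‖ ^ 2)))
    -- zb l attains Δ^k = min_{z ∈ Z^*} V_{k+1}(x^k − x, y^{k+1} − y) when i_k = l
    (zb : Fin n → X × (∀ i, Y i)) (hzb : ∀ l, zb l ∈ Zs)
    (hzbmin : ∀ l, ∀ z ∈ Zs,
      ((1 / 2) * (τ⁻¹ * ‖xcur - (zb l).1‖ ^ 2)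
        - (∑ i, (p i)⁻¹ * ⟪A i (xcur - (zb l).1),
            Function.update ycur l (yh l) i - ycur i⟫)
        + (1 / 2) * (∑ i, (σ i * p i)⁻¹ *
            ‖Function.update ycur l (yh l) i - ycur i‖ ^ 2)
        + (1 / 2) * (∑ i, (σ i * p i)⁻¹ *
            ‖Function.update ycur l (yh l) i - (zb l).2 i‖ ^ 2))
      ≤ ((1 / 2) * (τ⁻¹ * ‖xcur - z.1‖ ^ 2)
        - (∑ i, (p i)⁻¹ * ⟪A i (xcur - z.1),
            Function.update ycur l (yh l) i - ycur i⟫)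
        + (1 / 2) * (∑ i, (σ i * p i)⁻¹ *
            ‖Function.update ycur l (yh l) i - ycur i‖ ^ 2)
        + (1 / 2) * (∑ i, (σ i * p i)⁻¹ *
            ‖Function.update ycur l (yh l) i - z.2 i‖ ^ 2))) :
    -- E_k[Δ^k] ≤ Δ^{k−1} − V(z^k − z^{k−1})
    (∑ l, p l *
        ((1 / 2) * (τ⁻¹ * ‖xcur - (zb l).1‖ ^ 2)
          - (∑ i, (p i)⁻¹ * ⟪A i (xcur - (zb l).1),
              Function.update ycur l (yh l) i - ycur i⟫)
          + (1 / 2) * (∑ i, (σ i * p i)⁻¹ *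
              ‖Function.update ycur l (yh l) i - ycur i‖ ^ 2)
          + (1 / 2) * (∑ i, (σ i * p i)⁻¹ *
              ‖Function.update ycur l (yh l) i - (zb l).2 i‖ ^ 2)))
    ≤
    ((1 / 2) * (τ⁻¹ * ‖xprev - za.1‖ ^ 2)
      - (∑ i, (p i)⁻¹ * ⟪A i (xprev - za.1), ycur i - yprev i⟫)
      + (1 / 2) * (∑ i, (σ i * p i)⁻¹ * ‖ycur i - yprev i‖ ^ 2)
      + (1 / 2) * (∑ i, (σ i * p i)⁻¹ * ‖ycur i - za.2 i‖ ^ 2))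
    - ((1 / 2) * (τ⁻¹ * ‖xcur - xprev‖ ^ 2)
        + (1 / 2) * (∑ i, (σ i * p i)⁻¹ * ‖ycur i - yprev i‖ ^ 2)
        + ∑ i, (p i)⁻¹ * ⟪A i (xcur - xprev), ycur i - yprev i⟫) :=
  spdhg_projected_distance_decrease_general g fstar hg hfs A p σ τ hp hpsum hτ hσ Zs hZs xprev yprev
    ycur xcur hx yh hyh za hza zb hzbmin
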